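/- If μ is a type-preserving boundary strategy of Min, χ is a type-preserving boundary strategy of Max, and n ∈ ℕ, then the function assigning to each configuration q of the closed region graph the total time elapsed in the first n transitions of the run from q under (μ,χ) is regionally simple. -/

import Mathlib

noncomputable section

attribute [local instance] Classical.propDecidable

/-- A two-player (Min/Max) game arena with real-valued step costs. -/
structure Arena (Conf Move : Type) where
  Tr : Conf → Move → Conf → Prop
  cost : Conf → Move → ℝ
  IsMin : Conf → Prop

namespace Arena

variable {Conf Move : Type}

/-- A finite run in the arena. -/
structure FinRun (G : Arena Conf Move) where
  n : ℕ
  q : Fin (n + 1) → Conf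
  m : Fin n → Move
  valid : ∀ i : Fin n, G.Tr (q i.castSucc) (m i) (q i.succ)

/-- The last configuration of a finite run. -/
def FinRun.last {G : Arena Conf Move} (r : G.FinRun) : Conf := r.q (Fin.last r.n)

/-- The first configuration of a finite run. -/
def FinRun.first {G : Arena Conf Move} (r : G.FinRun) : Conf := r.q 0

/-- The trivial run consisting of a single configuration. -/
def single (G : Arena Conf Move) (q0 : Conf) : G.FinRun :=
  ⟨0, fun _ => q0, Fin.elim0, fun i => i.elim0⟩

/-- Extending a finite run by one transition. -/
def FinRun.extend {G : Arena Conf Move} (r : G.FinRun) (mv : Move) (q' : Conf)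
    (h : G.Tr r.last mv q') : G.FinRun where
  n := r.n + 1
  q := Fin.snoc r.q q'
  m := Fin.snoc r.m mv
  valid := by
    intro i
    induction i using Fin.lastCases with
    | last =>
        simpa [FinRun.last, Fin.snoc_castSucc, Fin.succ_last, Fin.snoc_last] using h
    | cast j =>
        rw [Fin.snoc_castSucc, Fin.snoc_castSucc, Fin.succ_castSucc, Fin.snoc_castSucc]
        exact r.valid j

/-- Strategies of player Min: mappings from finite runs to moves that are
available whenever the last configuration belongs to Min. -/
def MinStrategy (G : Arena Conf Move) : Type :=
  {σ : G.FinRun → Move // ∀ r : G.FinRun, G.IsMin r.last → ∃ q', G.Tr r.last (σ r) q'}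

/-- Strategies of player Max. -/
def MaxStrategy (G : Arena Conf Move) : Type :=
  {σ : G.FinRun → Move // ∀ r : G.FinRun, ¬ G.IsMin r.last → ∃ q', G.Tr r.last (σ r) q'}

/-- A strategy is positional if its choice depends only on the last configuration. -/
def Positional {G : Arena Conf Move} (σ : G.FinRun → Move) : Prop :=
  ∀ r r' : G.FinRun, r.last = r'.last → σ r = σ r'

/-- The finite prefixes of the unique play from `q0` in which Min uses `μ`
and Max uses `χ`. -/
def play (G : Arena Conf Move) (μ : G.MinStrategy) (χ : G.MaxStrategy) (q0 : Conf) :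
    ℕ → G.FinRun
  | 0 => G.single q0
  | n + 1 =>
    let r := G.play μ χ q0 n
    if h : G.IsMin r.last then
      r.extend (μ.1 r) (Classical.choose (μ.2 r h)) (Classical.choose_spec (μ.2 r h))
    else
      r.extend (χ.1 r) (Classical.choose (χ.2 r h)) (Classical.choose_spec (χ.2 r h))

/-- Total cost (e.g. total time) of a finite run. -/
def FinRun.time {G : Arena Conf Move} (r : G.FinRun) : ℝ :=
  ∑ i : Fin r.n, G.cost (r.q i.castSucc) (r.m i)

/-- Payoff of player Min (to be minimised): limsup of average cost. -/
def AMin (G : Arena Conf Move) (q0 : Conf) (μ : G.MinStrategy) (χ : G.MaxStrategy) : ℝ :=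
  Filter.limsup (fun n : ℕ => (G.play μ χ q0 n).time / n) Filter.atTop

/-- Payoff of player Max (to be maximised): liminf of average cost. -/
def AMax (G : Arena Conf Move) (q0 : Conf) (μ : G.MinStrategy) (χ : G.MaxStrategy) : ℝ :=
  Filter.liminf (fun n : ℕ => (G.play μ χ q0 n).time / n) Filter.atTop

/-- Upper value of the game at `q0`. -/
def upperVal (G : Arena Conf Move) (q0 : Conf) : ℝ :=
  ⨅ μ : G.MinStrategy, ⨆ χ : G.MaxStrategy, G.AMin q0 μ χ

/-- Lower value of the game at `q0`. -/
def lowerVal (G : Arena Conf Move) (q0 : Conf) : ℝ :=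
  ⨆ χ : G.MaxStrategy, ⨅ μ : G.MinStrategy, G.AMax q0 μ χ

/-- The value of the game at `q0` (meaningful when the game is determined). -/
def val (G : Arena Conf Move) (q0 : Conf) : ℝ := G.upperVal q0

end Arena
/-- `k`-bounded clock valuations. -/
def IsVal (k : ℕ) {C : Type} (ν : C → ℝ) : Prop := ∀ c, 0 ≤ ν c ∧ ν c ≤ (k : ℝ)

/-- Two clock valuations satisfy exactly the same simple clock constraints
`c ⋈ i` and `c − c' ⋈ i` with `i ∈ {0,…,k}` and `⋈ ∈ {<,=,>}` (hence also ≤, ≥). -/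
def RegEq (k : ℕ) {C : Type} (ν ν' : C → ℝ) : Prop :=
  ∀ i : ℕ, i ≤ k → ∀ c c' : C,
    ((ν c < (i : ℝ) ↔ ν' c < (i : ℝ)) ∧ (ν c = (i : ℝ) ↔ ν' c = (i : ℝ)) ∧
      ((i : ℝ) < ν c ↔ (i : ℝ) < ν' c)) ∧
    ((ν c - ν c' < (i : ℝ) ↔ ν' c - ν' c' < (i : ℝ)) ∧
      (ν c - ν c' = (i : ℝ) ↔ ν' c - ν' c' = (i : ℝ)) ∧
      ((i : ℝ) < ν c - ν c' ↔ (i : ℝ) < ν' c - ν' c'))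

/-- An average-time game on a (bounded) timed automaton: a timed automaton
together with a partition of locations between players Min and Max. -/
structure TimedGame where
  L : Type
  C : Type
  A : Type
  finL : Finite L
  finC : Finite C
  finA : Finite A
  k : ℕ
  S : Set (L × (C → ℝ))
  En : A → Set (L × (C → ℝ))
  δ : L → A → L
  ϱ : A → Set C
  LMin : Set L
  bounded : ∀ s ∈ S, IsVal k s.2
  S_zone : (∀ (ℓ : L) (ν ν' : C → ℝ), RegEq k ν ν' → ((ℓ, ν) ∈ S ↔ (ℓ, ν') ∈ S)) ∧
    ∀ ℓ : L, Convex ℝ {ν : C → ℝ | (ℓ, ν) ∈ S}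
  En_sub : ∀ a, En a ⊆ S
  En_zone : ∀ a : A,
    (∀ (ℓ : L) (ν ν' : C → ℝ), RegEq k ν ν' → ((ℓ, ν) ∈ En a ↔ (ℓ, ν') ∈ En a)) ∧
    ∀ ℓ : L, Convex ℝ {ν : C → ℝ | (ℓ, ν) ∈ En a}
  nonstuck : ∀ s ∈ S, ∃ (t : ℝ) (a : A), 0 ≤ t ∧
    (∀ t', 0 ≤ t' → t' ≤ t → (s.1, fun c => s.2 c + t') ∈ S) ∧
    ((s.1, fun c => s.2 c + t) ∈ En a) ∧
    ((δ s.1 a, fun c => if c ∈ ϱ a then 0 else s.2 c + t) ∈ S)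

namespace TimedGame

/-- Configurations of the timed automaton. -/
abbrev Q (T : TimedGame) : Type := T.L × (T.C → ℝ)

/-- Resetting the clocks in `X` to zero. -/
def resetv (T : TimedGame) (ν : T.C → ℝ) (X : Set T.C) : T.C → ℝ :=
  fun c => if c ∈ X then 0 else ν c

/-- The successor configuration after the timed action `τ = (t, a)`. -/
def tsucc (T : TimedGame) (s : T.Q) (τ : ℝ × T.A) : T.Q :=
  (T.δ s.1 τ.2, T.resetv (fun c => s.2 c + τ.1) (T.ϱ τ.2))

/-- The transition relation `s →_τ s'` of the timed automaton. -/
def Trans (T : TimedGame) (s : T.Q) (τ : ℝ × T.A) (s' : T.Q) : Prop :=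
  0 ≤ τ.1 ∧ (∀ t', 0 ≤ t' → t' ≤ τ.1 → (s.1, fun c => s.2 c + t') ∈ T.S) ∧
  ((s.1, fun c => s.2 c + τ.1) ∈ T.En τ.2) ∧ s' = T.tsucc s τ ∧ s' ∈ T.S

/-- The game arena of the average-time game played on the timed automaton. -/
def taArena (T : TimedGame) : Arena {s : T.Q // s ∈ T.S} (ℝ × T.A) where
  Tr := fun s τ s' => T.Trans s.1 τ s'.1
  cost := fun _ τ => τ.1
  IsMin := fun s => s.1.1 ∈ T.LMin

/-- A clock region: an equivalence class of the region equivalence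
(restricted to `k`-bounded valuations). -/
def IsClockRegion (T : TimedGame) (P : Set (T.C → ℝ)) : Prop :=
  ∃ ν : T.C → ℝ, P = {ν' | IsVal T.k ν' ∧ RegEq T.k ν ν'}

/-- Regions: pairs of a location and a clock region. -/
def Region (T : TimedGame) : Type :=
  T.L × {P : Set (T.C → ℝ) // T.IsClockRegion P}

/-- The clock region of a valuation. -/
def clockRegionOf (T : TimedGame) (ν : T.C → ℝ) : {P : Set (T.C → ℝ) // T.IsClockRegion P} :=
  ⟨{ν' | IsVal T.k ν' ∧ RegEq T.k ν ν'}, ⟨ν, rfl⟩⟩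

/-- The region `[s]` of a configuration `s`. -/
def regionOf (T : TimedGame) (s : T.Q) : T.Region := (s.1, T.clockRegionOf s.2)

/-- The configurations `Ω` of the region graphs: pairs of a configuration
of the timed automaton and a region. -/
abbrev Omega (T : TimedGame) : Type := T.Q × T.Region

/-- `(s, (ℓ, P))` is a state of the closed region graph: the locations match
and `s`'s valuation lies in the closure of the clock region `P`. -/
def barS (T : TimedGame) (q : T.Omega) : Prop :=
  q.1.1 = q.2.1 ∧ q.1.2 ∈ closure q.2.2.1

/-- `(s, (ℓ, P))` is a state of the region graph: the locations match and
`s`'s valuation lies in the clock region `P`. -/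
def tildeS (T : TimedGame) (q : T.Omega) : Prop :=
  q.1.1 = q.2.1 ∧ q.1.2 ∈ q.2.2.1

/-- `R →_* R'` : the region `R'` is a time successor of `R`. -/
def timeSucc (T : TimedGame) (R R' : T.Region) : Prop :=
  R.1 = R'.1 ∧ ∀ ν ∈ R.2.1, ∃ t : ℝ, 0 ≤ t ∧
    (∀ t', 0 ≤ t' → t' ≤ t → (R.1, fun c => ν c + t') ∈ T.S) ∧
    (fun c => ν c + t) ∈ R'.2.1

/-- The discrete transition `s →^a s'` of the timed automaton. -/
def astep (T : TimedGame) (s : T.Q) (a : T.A) (s' : T.Q) : Prop :=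
  s ∈ T.S ∧ s' ∈ T.S ∧ s ∈ T.En a ∧ s' = (T.δ s.1 a, T.resetv s.2 (T.ϱ a))

/-- `R →^a R'` at the level of regions. -/
def regAct (T : TimedGame) (R : T.Region) (a : T.A) (R' : T.Region) : Prop :=
  ∃ ν ∈ R.2.1, ∃ ν' ∈ R'.2.1, T.astep (R.1, ν) a (R'.1, ν')

/-- Moves of the region graphs: a delay, an intermediate region, and an action. -/
abbrev RMove (T : TimedGame) : Type := ℝ × T.Region × T.A

/-- Transitions underlying pre-runs: `(s', R') = succ((s,R), (t,R'',a))` with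
`R →_* R'' →^a R'`. -/
def preTrans (T : TimedGame) (q : T.Omega) (m : T.RMove) (q' : T.Omega) : Prop :=
  0 ≤ m.1 ∧ T.timeSucc q.2 m.2.1 ∧ T.regAct m.2.1 m.2.2 q'.2 ∧
  q'.1 = T.tsucc q.1 (m.1, m.2.2)

/-- Labelled transitions of the closed region graph `T̄`. -/
def cTrans (T : TimedGame) (q : T.Omega) (m : T.RMove) (q' : T.Omega) : Prop :=
  T.preTrans q m q' ∧ T.barS q ∧ T.barS q' ∧
  (fun c => q.1.2 c + m.1) ∈ closure m.2.1.2.1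

/-- Labelled transitions of the boundary region graph `T̂`: additionally the
intermediate valuation lies on the boundary of the intermediate region. -/
def bTrans (T : TimedGame) (q : T.Omega) (m : T.RMove) (q' : T.Omega) : Prop :=
  T.cTrans q m q' ∧ (fun c => q.1.2 c + m.1) ∈ frontier m.2.1.2.1

/-- Labelled transitions of the region graph `T̃`. -/
def rTrans (T : TimedGame) (q : T.Omega) (m : T.RMove) (q' : T.Omega) : Prop :=
  T.preTrans q m q' ∧ T.tildeS q ∧ T.tildeS q' ∧
  (fun c => q.1.2 c + m.1) ∈ m.2.1.2.1

/-- The arena of pre-runs over `Ω`. -/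
def preArena (T : TimedGame) : Arena T.Omega T.RMove where
  Tr := T.preTrans
  cost := fun _ m => m.1
  IsMin := fun q => q.2.1 ∈ T.LMin

/-- Finite pre-runs. -/
abbrev PreRunF (T : TimedGame) : Type := (T.preArena).FinRun

/-- Pre-strategies of Min. -/
abbrev MinPre (T : TimedGame) : Type := (T.preArena).MinStrategy

/-- Pre-strategies of Max. -/
abbrev MaxPre (T : TimedGame) : Type := (T.preArena).MaxStrategy

/-- A pre-strategy of Min is a strategy in the closed region graph `T̄`
if it always waits into the closure of the chosen intermediate region. -/
def MinClosed (T : TimedGame) (μ : T.MinPre) : Prop :=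
  ∀ r : T.PreRunF,
    (fun c => (Arena.FinRun.last r).1.2 c + (μ.1 r).1) ∈ closure (μ.1 r).2.1.2.1

def MaxClosed (T : TimedGame) (χ : T.MaxPre) : Prop :=
  ∀ r : T.PreRunF,
    (fun c => (Arena.FinRun.last r).1.2 c + (χ.1 r).1) ∈ closure (χ.1 r).2.1.2.1

/-- Admissible strategies: strategies in the region graph `T̃`. -/
def MinAdmissible (T : TimedGame) (μ : T.MinPre) : Prop :=
  ∀ r : T.PreRunF,
    (fun c => (Arena.FinRun.last r).1.2 c + (μ.1 r).1) ∈ (μ.1 r).2.1.2.1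

def MaxAdmissible (T : TimedGame) (χ : T.MaxPre) : Prop :=
  ∀ r : T.PreRunF,
    (fun c => (Arena.FinRun.last r).1.2 c + (χ.1 r).1) ∈ (χ.1 r).2.1.2.1

/-- Boundary strategies of Min: the delay is the **infimum** of the delays
reaching the closure of the chosen intermediate region. -/
def MinBoundary (T : TimedGame) (μ : T.MinPre) : Prop :=
  ∀ r : T.PreRunF,
    (μ.1 r).1 = sInf {t : ℝ | 0 ≤ t ∧
      (fun c => (Arena.FinRun.last r).1.2 c + t) ∈ closure (μ.1 r).2.1.2.1}

/-- Boundary strategies of Max: the delay is the **supremum** of the delays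
reaching the closure of the chosen intermediate region. -/
def MaxBoundary (T : TimedGame) (χ : T.MaxPre) : Prop :=
  ∀ r : T.PreRunF,
    (χ.1 r).1 = sSup {t : ℝ | 0 ≤ t ∧
      (fun c => (Arena.FinRun.last r).1.2 c + t) ∈ closure (χ.1 r).2.1.2.1}

/-- The sequence of regions visited by a finite pre-run (its type, part 1). -/
def typeConfs (T : TimedGame) (r : T.PreRunF) : ℕ → Option T.Region :=
  fun i => if h : i < r.n + 1 then some ((r.q ⟨i, h⟩).2) else none

/-- The sequence of intermediate regions and actions of a finite pre-run
(its type, part 2). -/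
def typeMoves (T : TimedGame) (r : T.PreRunF) : ℕ → Option (T.Region × T.A) :=
  fun i => if h : i < r.n then some ((r.m ⟨i, h⟩).2) else none

/-- Two finite pre-runs have the same type. -/
def sameType (T : TimedGame) (r r' : T.PreRunF) : Prop :=
  T.typeConfs r = T.typeConfs r' ∧ T.typeMoves r = T.typeMoves r'

/-- The waiting time `t(s, α)` of the boundary timed action `α = (b, c, a)`. -/
def tOf (T : TimedGame) (s : T.Q) (α : ℕ × T.C × T.A) : ℝ :=
  if s.2 α.2.1 ≤ (α.1 : ℝ) then (α.1 : ℝ) - s.2 α.2.1 else 0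

/-- Type-preserving boundary strategies of Min: runs of the same type are
assigned the same intermediate region, action and boundary timed action. -/
def MinTP (T : TimedGame) (μ : T.MinPre) : Prop :=
  T.MinBoundary μ ∧
  ∀ r r' : T.PreRunF, T.sameType r r' →
    (μ.1 r).2 = (μ.1 r').2 ∧
    ∃ (b : ℕ) (c : T.C), b ≤ T.k ∧
      (μ.1 r).1 = T.tOf (Arena.FinRun.last r).1 (b, c, (μ.1 r).2.2) ∧
      (μ.1 r').1 = T.tOf (Arena.FinRun.last r').1 (b, c, (μ.1 r').2.2)

def MaxTP (T : TimedGame) (χ : T.MaxPre) : Prop :=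
  T.MaxBoundary χ ∧
  ∀ r r' : T.PreRunF, T.sameType r r' →
    (χ.1 r).2 = (χ.1 r').2 ∧
    ∃ (b : ℕ) (c : T.C), b ≤ T.k ∧
      (χ.1 r).1 = T.tOf (Arena.FinRun.last r).1 (b, c, (χ.1 r).2.2) ∧
      (χ.1 r').1 = T.tOf (Arena.FinRun.last r').1 (b, c, (χ.1 r').2.2)

/-- `μ_ε` is `ε`-close to the type-preserving boundary strategy `μ` of Min. -/
def EpsCloseMin (T : TimedGame) (μ με : T.MinPre) (ε : ℝ) : Prop :=
  ∀ r : T.PreRunF, (με.1 r).2 = (μ.1 r).2 ∧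
    (fun c => (Arena.FinRun.last r).1.2 c + (με.1 r).1) ∈ (μ.1 r).2.1.2.1 ∧
    (με.1 r).1 ≤ (μ.1 r).1 + ε

/-- `χ_ε` is `ε`-close to the type-preserving boundary strategy `χ` of Max. -/
def EpsCloseMax (T : TimedGame) (χ χε : T.MaxPre) (ε : ℝ) : Prop :=
  ∀ r : T.PreRunF, (χε.1 r).2 = (χ.1 r).2 ∧
    (fun c => (Arena.FinRun.last r).1.2 c + (χε.1 r).1) ∈ (χ.1 r).2.1.2.1 ∧
    (χ.1 r).1 - ε ≤ (χε.1 r).1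

/-- Upper value of the game on the subgraph of region graphs whose strategies
are the pre-strategies satisfying `PMin`, `PMax` respectively. -/
def upperG (T : TimedGame) (PMin : T.MinPre → Prop) (PMax : T.MaxPre → Prop)
    (q : T.Omega) : ℝ :=
  ⨅ μ : {μ : T.MinPre // PMin μ}, ⨆ χ : {χ : T.MaxPre // PMax χ},
    Arena.AMin T.preArena q μ.1 χ.1

/-- Lower value. -/
def lowerG (T : TimedGame) (PMin : T.MinPre → Prop) (PMax : T.MaxPre → Prop)
    (q : T.Omega) : ℝ :=
  ⨆ χ : {χ : T.MaxPre // PMax χ}, ⨅ μ : {μ : T.MinPre // PMin μ},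
    Arena.AMax T.preArena q μ.1 χ.1

def upperBar (T : TimedGame) : T.Omega → ℝ := T.upperG T.MinClosed T.MaxClosed
def lowerBar (T : TimedGame) : T.Omega → ℝ := T.lowerG T.MinClosed T.MaxClosed
/-- The value of the average-time game on the closed region graph `T̄`. -/
def valBar (T : TimedGame) : T.Omega → ℝ := T.upperBar

def upperHat (T : TimedGame) : T.Omega → ℝ := T.upperG T.MinBoundary T.MaxBoundary
def lowerHat (T : TimedGame) : T.Omega → ℝ := T.lowerG T.MinBoundary T.MaxBoundary
/-- The value of the average-time game on the boundary region graph `T̂`. -/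
def valHat (T : TimedGame) : T.Omega → ℝ := T.upperHat

def upperTilde (T : TimedGame) : T.Omega → ℝ := T.upperG T.MinAdmissible T.MaxAdmissible
def lowerTilde (T : TimedGame) : T.Omega → ℝ := T.lowerG T.MinAdmissible T.MaxAdmissible
/-- The value of the average-time game on the region graph `T̃`. -/
def valTilde (T : TimedGame) : T.Omega → ℝ := T.upperTilde

/-- A function is simple on a set `X` of configurations. -/
def SimpleOn (T : TimedGame) (X : Set T.Omega) (F : T.Omega → ℝ) : Prop :=
  (∃ e : ℤ, ∀ q ∈ X, F q = (e : ℝ)) ∨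
  (∃ (e : ℤ) (c : T.C), ∀ q ∈ X, F q = (e : ℝ) - q.1.2 c)

/-- A function on the configurations of the closed region graph is regionally
simple. -/
def RegionallySimple (T : TimedGame) (F : T.Omega → ℝ) : Prop :=
  ∀ R : T.Region, T.SimpleOn {q : T.Omega | T.barS q ∧ q.2 = R} F

/-- A function on the configurations of the closed region graph is regionally
constant. -/
def RegionallyConstant (T : TimedGame) (F : T.Omega → ℝ) : Prop :=
  ∀ R : T.Region, ∃ v : ℝ, ∀ q : T.Omega, T.barS q → q.2 = R → F q = v

/-- The configuration `(s, [s])` of the region graphs determined by a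
configuration `s` of the timed automaton. -/
def confOf (T : TimedGame) (s : T.Q) : T.Omega := (s, T.regionOf s)

/-- A region is thin if some clock has an integer value throughout its closure. -/
def Thin (T : TimedGame) (R : T.Region) : Prop :=
  ∃ c : T.C, ∀ ν ∈ closure R.2.1, ∃ m : ℤ, ν c = (m : ℝ)

/-- `R'` is the immediate time successor of `R`. -/
def ImmTimeSucc (T : TimedGame) (R R' : T.Region) : Prop :=
  R.1 = R'.1 ∧ ∀ ν ∈ R.2.1, ∃ ε : ℝ, 0 < ε ∧
    ∀ t : ℝ, 0 < t → t < ε → (fun c => ν c + t) ∈ R'.2.1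

end TimedGame

/-!
Fix a region `R`, a point `ν₀ ∈ R`, and compare the run from any `ν ∈ closure R` with the run
from `ν₀`. By induction on the length, the two runs have the same type, and the elapsed time `τ` is
`e - x` while each clock value is `τ + g + y`, with integers `e`, `g` and initial clock values (or
`0`) `x`, `y` that are the same for both runs. Under type-preserving boundary strategies both runs
then wait `max (b - z) 0` for the same integer `b` and clock `z`; whether `z ≤ b` is an integer
constraint on the initial clocks, which `ν` satisfies non-strictly whenever `ν₀` satisfies it, so
either both runs wait until `z = b` or both do not wait. Actions determine the next region, so the
types stay equal. Finally, an identity between integer expressions in the initial clocks transfers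
from `ν₀` to `ν`, so one expression `e₀ - x₀` gives the time for the whole of `closure R`.
-/

section Valuations

variable {k : ℕ} {C : Type} {ν ρ σ : C → ℝ}

theorem RegEq.symm (h : RegEq k ν ρ) : RegEq k ρ ν := fun i hi c c' =>
  let ⟨⟨a₁, a₂, a₃⟩, b₁, b₂, b₃⟩ := h i hi c c'
  ⟨⟨a₁.symm, a₂.symm, a₃.symm⟩, b₁.symm, b₂.symm, b₃.symm⟩

theorem RegEq.trans (h : RegEq k ν ρ) (h' : RegEq k ρ σ) : RegEq k ν σ := fun i hi c c' =>
  let ⟨⟨a₁, a₂, a₃⟩, b₁, b₂, b₃⟩ := h i hi c c'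
  let ⟨⟨a₁', a₂', a₃'⟩, b₁', b₂', b₃'⟩ := h' i hi c c'
  ⟨⟨a₁.trans a₁', a₂.trans a₂', a₃.trans a₃'⟩, b₁.trans b₁', b₂.trans b₂', b₃.trans b₃'⟩

theorem RegEq.lt_intCast_iff (h : RegEq k ν ρ) (hν : IsVal k ν) (hρ : IsVal k ρ) (x : C)
    (m : ℤ) : ν x < m ↔ ρ x < m := by
  rcases lt_or_ge m 0 with hm | hm
  · have hm : (m : ℝ) < 0 := by exact_mod_cast hm
    exact iff_of_false (by linarith [(hν x).1]) (by linarith [(hρ x).1])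
  lift m to ℕ using hm
  by_cases hmk : m ≤ k
  · exact_mod_cast (h m hmk x x).1.1
  · have hmk : (k : ℝ) < m := by exact_mod_cast not_le.mp hmk
    exact iff_of_true (by push_cast; linarith [(hν x).2]) (by push_cast; linarith [(hρ x).2])

theorem RegEq.intCast_lt_iff (h : RegEq k ν ρ) (hν : IsVal k ν) (hρ : IsVal k ρ) (x : C)
    (m : ℤ) : m < ν x ↔ m < ρ x := by
  rcases lt_or_ge m 0 with hm | hm
  · have hm : (m : ℝ) < 0 := by exact_mod_cast hm
    exact iff_of_true (by linarith [(hν x).1]) (by linarith [(hρ x).1])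
  lift m to ℕ using hm
  by_cases hmk : m ≤ k
  · exact_mod_cast (h m hmk x x).1.2.2
  · have hmk : (k : ℝ) < m := by exact_mod_cast not_le.mp hmk
    exact iff_of_false (by push_cast; linarith [(hν x).2]) (by push_cast; linarith [(hρ x).2])

theorem RegEq.sub_lt_intCast_iff (h : RegEq k ν ρ) (hν : IsVal k ν) (hρ : IsVal k ρ)
    (x y : C) (m : ℤ) : ν x - ν y < m ↔ ρ x - ρ y < m := by
  obtain ⟨i, rfl | rfl⟩ := Int.eq_nat_or_neg m
  · by_cases hik : i ≤ k
    · exact_mod_cast (h i hik x y).2.1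
    · have hik : (k : ℝ) < i := by exact_mod_cast not_le.mp hik
      exact iff_of_true (by push_cast; linarith [(hν x).2, (hν y).1])
        (by push_cast; linarith [(hρ x).2, (hρ y).1])
  · have hswap : ∀ τ : C → ℝ, τ x - τ y < ((-i : ℤ) : ℝ) ↔ (i : ℝ) < τ y - τ x := fun τ => by
      push_cast; constructor <;> intro <;> linarith
    rw [hswap, hswap]
    by_cases hik : i ≤ k
    · exact (h i hik y x).2.2.2
    · have hik : (k : ℝ) < i := by exact_mod_cast not_le.mp hik
      exact iff_of_false (by linarith [(hν y).2, (hν x).1]) (by linarith [(hρ y).2, (hρ x).1])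

end Valuations

section ExtendedValuations

variable {k : ℕ} {C : Type} {ν ρ ν₀ s s₀ : C → ℝ} {τ τ₀ : ℝ}

/-- The valuation extended by a virtual clock `none` that is constantly `0`, so that simple
expressions `e` and `e - ν c` both take the form `e - extVal ν Y`. -/
def extVal (ν : C → ℝ) : Option C → ℝ
  | none => 0
  | some c => ν c

theorem continuous_extVal (d : Option C) : Continuous fun ν : C → ℝ => extVal ν d := by
  cases d with
  | none => exact continuous_const
  | some c => exact continuous_apply c

theorem RegEq.extVal_sub_lt_intCast_iff (h : RegEq k ν ρ) (hν : IsVal k ν) (hρ : IsVal k ρ)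
    (d Y : Option C) (m : ℤ) :
    extVal ν d - extVal ν Y < m ↔ extVal ρ d - extVal ρ Y < m := by
  have hneg : ∀ x : ℝ, 0 - x < m ↔ ((-m : ℤ) : ℝ) < x := fun x => by
    push_cast; constructor <;> intro <;> linarith
  rcases d with _ | x <;> rcases Y with _ | y <;> simp only [extVal, sub_zero]
  · rw [hneg, hneg]; exact h.intCast_lt_iff hν hρ _ _
  · exact h.lt_intCast_iff hν hρ _ _
  · exact h.sub_lt_intCast_iff hν hρ _ _ _

theorem RegEq.intCast_lt_extVal_sub_iff (h : RegEq k ν ρ) (hν : IsVal k ν) (hρ : IsVal k ρ)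
    (d Y : Option C) (m : ℤ) :
    m < extVal ν d - extVal ν Y ↔ m < extVal ρ d - extVal ρ Y := by
  have hswap : ∀ τ : C → ℝ, m < extVal τ d - extVal τ Y ↔
      extVal τ Y - extVal τ d < ((-m : ℤ) : ℝ) := fun τ => by
    push_cast; constructor <;> intro <;> linarith
  rw [hswap, hswap]
  exact h.extVal_sub_lt_intCast_iff hν hρ Y d (-m)

theorem RegEq.extVal_sub_le_intCast_iff (h : RegEq k ν ρ) (hν : IsVal k ν) (hρ : IsVal k ρ)
    (d Y : Option C) (m : ℤ) :
    extVal ν d - extVal ν Y ≤ m ↔ extVal ρ d - extVal ρ Y ≤ m := by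
  simp only [← not_lt, h.intCast_lt_extVal_sub_iff hν hρ]

theorem RegEq.extVal_sub_eq_intCast_iff (h : RegEq k ν ρ) (hν : IsVal k ν) (hρ : IsVal k ρ)
    (d Y : Option C) (m : ℤ) :
    extVal ν d - extVal ν Y = m ↔ extVal ρ d - extVal ρ Y = m := by
  simp only [le_antisymm_iff, ← not_lt, h.intCast_lt_extVal_sub_iff hν hρ,
    h.extVal_sub_lt_intCast_iff hν hρ]

/-- Membership of `ν` in the closure of the region of `ν₀` is only used through this property. -/
def BoundsTransfer (ν₀ ν : C → ℝ) : Prop :=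
  ∀ (d Y : Option C) (m : ℤ), extVal ν₀ d - extVal ν₀ Y ≤ m → extVal ν d - extVal ν Y ≤ m

theorem BoundsTransfer.refl (ν : C → ℝ) : BoundsTransfer ν ν := fun _ _ _ => id

theorem BoundsTransfer.ge (h : BoundsTransfer ν₀ ν) {d Y : Option C} {m : ℤ}
    (hm : m ≤ extVal ν₀ d - extVal ν₀ Y) : m ≤ extVal ν d - extVal ν Y := by
  have := h Y d (-m) (by push_cast; linarith)
  push_cast at this
  linarith

theorem BoundsTransfer.sub_extVal_eq (h : BoundsTransfer ν₀ ν) {E E' : ℤ} {Y Y' : Option C}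
    (he : E - extVal ν₀ Y = E' - extVal ν₀ Y') : (E : ℝ) - extVal ν Y = E' - extVal ν Y' := by
  have hle := h Y' Y (E' - E) (by push_cast; linarith)
  have hge := h.ge (d := Y') (Y := Y) (m := E' - E) (by push_cast; linarith)
  push_cast at hle hge
  linarith

/-- `s`, `s₀` are the clock values reached from `ν`, `ν₀` after total time `τ`, `τ₀`. -/
structure SameAffineForm (ν ν₀ s s₀ : C → ℝ) (τ τ₀ : ℝ) : Prop where
  time : ∃ (E : ℤ) (Y : Option C), τ = E - extVal ν Y ∧ τ₀ = E - extVal ν₀ Y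
  clock : ∀ c, ∃ (g : ℤ) (d : Option C),
    s c = τ + g + extVal ν d ∧ s₀ c = τ₀ + g + extVal ν₀ d

theorem sameAffineForm_init (ν ν₀ : C → ℝ) : SameAffineForm ν ν₀ ν ν₀ 0 0 :=
  ⟨⟨0, none, by simp [extVal], by simp [extVal]⟩,
    fun c => ⟨0, some c, by simp [extVal], by simp [extVal]⟩⟩

/-- The sign of `b - s c` is decided by an integer constraint on `ν₀` that `ν` inherits
non-strictly, so either both sides wait until clock `c` reaches `b` or both wait `0`. -/
theorem SameAffineForm.boundaryDelay (h : SameAffineForm ν ν₀ s s₀ τ τ₀)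
    (hT : BoundsTransfer ν₀ ν) (b : ℤ) (c : C) :
    ∃ (E : ℤ) (Y : Option C),
      τ + max (b - s c) 0 = E - extVal ν Y ∧ τ₀ + max (b - s₀ c) 0 = E - extVal ν₀ Y := by
  obtain ⟨E, Y, hτ, hτ₀⟩ := h.time
  obtain ⟨g, d, hs, hs₀⟩ := h.clock c
  rcases le_total (s₀ c) b with hb | hb
  · have := hT d Y (b - E - g) (by push_cast; linarith)
    push_cast at this
    refine ⟨b - g, d, ?_, ?_⟩
    · rw [max_eq_left (by linarith)]; push_cast; linarith
    · rw [max_eq_left (by linarith)]; push_cast; linarith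
  · have := hT.ge (d := d) (Y := Y) (m := b - E - g) (by push_cast; linarith)
    push_cast at this
    exact ⟨E, Y, by rw [max_eq_right (by linarith)]; linarith,
      by rw [max_eq_right (by linarith)]; linarith⟩

theorem SameAffineForm.elapse_reset (h : SameAffineForm ν ν₀ s s₀ τ τ₀) {t t₀ : ℝ}
    (ht : ∃ (E : ℤ) (Y : Option C), τ + t = E - extVal ν Y ∧ τ₀ + t₀ = E - extVal ν₀ Y)
    (X : Set C) :
    SameAffineForm ν ν₀ (fun c => if c ∈ X then 0 else s c + t)
      (fun c => if c ∈ X then 0 else s₀ c + t₀) (τ + t) (τ₀ + t₀) := by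
  obtain ⟨E, Y, hE, hE₀⟩ := ht
  refine ⟨⟨E, Y, hE, hE₀⟩, fun c => ?_⟩
  by_cases hc : c ∈ X
  · refine ⟨-E, Y, ?_, ?_⟩ <;> simp only [hc, if_true] <;> push_cast <;> linarith
  · obtain ⟨g, d, hs, hs₀⟩ := h.clock c
    exact ⟨g, d, by simp only [hc, if_false, hs]; ring, by simp only [hc, if_false, hs₀]; ring⟩

end ExtendedValuations

namespace Arena

variable {Conf Move : Type} {G : Arena Conf Move}

theorem FinRun.last_extend (r : G.FinRun) (mv : Move) (q : Conf) (h : G.Tr r.last mv q) :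
    (r.extend mv q h).last = q := by
  simp only [FinRun.last, FinRun.extend, Fin.snoc_last]

theorem FinRun.time_extend (r : G.FinRun) (mv : Move) (q : Conf) (h : G.Tr r.last mv q) :
    (r.extend mv q h).time = r.time + G.cost r.last mv :=
  (Fin.sum_univ_castSucc (n := r.n) fun i => G.cost ((r.extend mv q h).q i.castSucc)
    ((r.extend mv q h).m i)).trans (by simp [FinRun.extend, FinRun.last, FinRun.time])

theorem time_single (q : Conf) : (G.single q).time = 0 :=
  Fin.sum_univ_zero _

theorem last_single (q : Conf) : (G.single q).last = q := rfl

end Arena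

namespace TimedGame

variable {T : TimedGame} {P P' : Set (T.C → ℝ)} {ν ν' ν₀ : T.C → ℝ}

theorem IsClockRegion.isVal_of_mem (hP : T.IsClockRegion P) (hν : ν ∈ P) : IsVal T.k ν := by
  obtain ⟨β, rfl⟩ := hP
  exact hν.1

theorem IsClockRegion.regEq_of_mem (hP : T.IsClockRegion P) (hν : ν ∈ P) (hν' : ν' ∈ P) :
    RegEq T.k ν ν' := by
  obtain ⟨β, rfl⟩ := hP
  exact hν.2.symm.trans hν'.2

theorem IsClockRegion.eq_of_regEq (hP : T.IsClockRegion P) (hP' : T.IsClockRegion P')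
    (hν : ν ∈ P) (hν' : ν' ∈ P') (h : RegEq T.k ν ν') : P = P' := by
  obtain ⟨β, rfl⟩ := hP
  obtain ⟨β', rfl⟩ := hP'
  ext ρ
  exact ⟨fun ⟨hρ, hβρ⟩ => ⟨hρ, hν'.2.trans (h.symm.trans (hν.2.symm.trans hβρ))⟩,
    fun ⟨hρ, hβρ⟩ => ⟨hρ, hν.2.trans (h.trans (hν'.2.symm.trans hβρ))⟩⟩

theorem IsClockRegion.boundsTransfer (hP : T.IsClockRegion P) (hν₀ : ν₀ ∈ P)
    (hν : ν ∈ closure P) : BoundsTransfer ν₀ ν := by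
  intro d Y m hm
  have hsub : P ⊆ {ρ | extVal ρ d - extVal ρ Y ≤ m} := fun ρ hρ =>
    ((hP.regEq_of_mem hν₀ hρ).extVal_sub_le_intCast_iff (hP.isVal_of_mem hν₀)
      (hP.isVal_of_mem hρ) d Y m).mp hm
  exact closure_minimal hsub
    (isClosed_le ((continuous_extVal d).sub (continuous_extVal Y)) continuous_const) hν

theorem resetv_eq_extVal (ν : T.C → ℝ) (X : Set T.C) (c : T.C) :
    T.resetv ν X c = extVal ν (if c ∈ X then none else some c) := by
  unfold resetv
  split_ifs <;> rfl

theorem _root_.RegEq.resetv (h : RegEq T.k ν ν') (hν : IsVal T.k ν) (hν' : IsVal T.k ν')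
    (X : Set T.C) : RegEq T.k (T.resetv ν X) (T.resetv ν' X) := by
  intro i _ c c'
  simp only [resetv_eq_extVal]
  generalize (if c ∈ X then none else some c) = d
  generalize (if c' ∈ X then none else some c') = d'
  have hcmp (Y : Option T.C) := And.intro (h.extVal_sub_lt_intCast_iff hν hν' d Y i)
    (And.intro (h.extVal_sub_eq_intCast_iff hν hν' d Y i)
      (h.intCast_lt_extVal_sub_iff hν hν' d Y i))
  push_cast at hcmp
  exact ⟨by simpa [extVal] using hcmp none, hcmp d'⟩

theorem regAct_unique {R'' R₁ R₂ : T.Region} {a : T.A} (h₁ : T.regAct R'' a R₁)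
    (h₂ : T.regAct R'' a R₂) : R₁ = R₂ := by
  obtain ⟨ν₁, hν₁, ν₁', hν₁', -, -, -, he₁⟩ := h₁
  obtain ⟨ν₂, hν₂, ν₂', hν₂', -, -, -, he₂⟩ := h₂
  simp only [Prod.mk.injEq] at he₁ he₂
  obtain ⟨hl₁, rfl⟩ := he₁
  obtain ⟨hl₂, rfl⟩ := he₂
  have hR'' := R''.2.2
  refine Prod.ext (hl₁.trans hl₂.symm) (Subtype.ext (R₁.2.2.eq_of_regEq R₂.2.2 hν₁' hν₂' ?_))
  exact (hR''.regEq_of_mem hν₁ hν₂).resetv (hR''.isVal_of_mem hν₁) (hR''.isVal_of_mem hν₂) _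

theorem typeConfs_extend (r : T.PreRunF) (mv : T.RMove) (q : T.Omega)
    (h : T.preArena.Tr r.last mv q) :
    T.typeConfs (r.extend mv q h) = Function.update (T.typeConfs r) (r.n + 1) (some q.2) := by
  funext j
  rw [Function.update_apply]
  rcases lt_trichotomy j (r.n + 1) with hj | rfl | hj
  · simp only [typeConfs, Arena.FinRun.extend, Fin.snoc, Order.lt_add_one_iff, hj, hj.le, hj.ne,
      ↓reduceDIte, ↓reduceIte, Fin.castSucc_castLT, cast_eq, Option.some.injEq]
    rfl
  · simp [typeConfs, Arena.FinRun.extend, Fin.snoc]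
  · simp [typeConfs, Arena.FinRun.extend, hj.ne', hj.not_gt, show ¬ j < r.n + 1 + 1 by omega]

theorem typeMoves_extend (r : T.PreRunF) (mv : T.RMove) (q : T.Omega)
    (h : T.preArena.Tr r.last mv q) :
    T.typeMoves (r.extend mv q h) = Function.update (T.typeMoves r) r.n (some mv.2) := by
  funext j
  rw [Function.update_apply]
  rcases lt_trichotomy j r.n with hj | rfl | hj
  · simp only [typeMoves, Arena.FinRun.extend, Fin.snoc, Order.lt_add_one_iff, hj, hj.le, hj.ne,
      ↓reduceDIte, ↓reduceIte, Fin.castSucc_castLT, cast_eq, Option.some.injEq]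
    rfl
  · simp [typeMoves, Arena.FinRun.extend, Fin.snoc]
  · simp [typeMoves, Arena.FinRun.extend, hj.ne', hj.not_gt, show ¬ j < r.n + 1 by omega]

theorem isSome_typeConfs_iff (r : T.PreRunF) (j : ℕ) :
    (T.typeConfs r j).isSome ↔ j < r.n + 1 := by
  unfold typeConfs
  split_ifs with hj <;> simp [hj]

theorem typeConfs_n (r : T.PreRunF) : T.typeConfs r r.n = some r.last.2 := by
  simp [typeConfs, Arena.FinRun.last, Fin.last]

theorem sameType.n_eq {r r₀ : T.PreRunF} (h : T.sameType r r₀) : r.n = r₀.n := by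
  have hlen : ∀ j, j < r.n + 1 ↔ j < r₀.n + 1 := fun j => by
    rw [← isSome_typeConfs_iff, ← isSome_typeConfs_iff, h.1]
  have := (hlen r.n).mp (by omega)
  have := (hlen r₀.n).mpr (by omega)
  omega

theorem sameType.last_region {r r₀ : T.PreRunF} (h : T.sameType r r₀) :
    r.last.2 = r₀.last.2 := by
  have := congrFun h.1 r.n
  rwa [typeConfs_n, h.n_eq, typeConfs_n, Option.some_inj] at this

theorem sameType_single {q q₀ : T.Omega} (hq : q.2 = q₀.2) :
    T.sameType (T.preArena.single q) (T.preArena.single q₀) := by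
  refine ⟨funext fun j => ?_, funext fun j => by simp [typeMoves, Arena.single]⟩
  by_cases hj : j < 1 <;> simp [typeConfs, Arena.single, hj, hq]

theorem sameType.extend {r r₀ : T.PreRunF} (h : T.sameType r r₀) {mv mv₀ : T.RMove}
    {q q₀ : T.Omega} (hr : T.preArena.Tr r.last mv q) (hr₀ : T.preArena.Tr r₀.last mv₀ q₀)
    (hmv : mv.2 = mv₀.2) (hq : q.2 = q₀.2) :
    T.sameType (r.extend mv q hr) (r₀.extend mv₀ q₀ hr₀) := by
  constructor
  · rw [typeConfs_extend, typeConfs_extend, h.1, h.n_eq, hq]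
  · rw [typeMoves_extend, typeMoves_extend, h.2, h.n_eq, hmv]

theorem tOf_eq_max (s : T.Q) (b : ℕ) (c : T.C) (a : T.A) :
    T.tOf s (b, c, a) = max ((b : ℝ) - s.2 c) 0 := by
  unfold tOf
  split_ifs with h
  · exact (max_eq_left (by simpa using h)).symm
  · exact (max_eq_right (by linarith [not_le.mp h])).symm

/-- The part of `MinTP` and `MaxTP` beyond being a boundary strategy. -/
def TypePreservingMoves (T : TimedGame) (σ : T.PreRunF → T.RMove) : Prop :=
  ∀ r r' : T.PreRunF, T.sameType r r' →
    (σ r).2 = (σ r').2 ∧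
    ∃ (b : ℕ) (c : T.C), b ≤ T.k ∧
      (σ r).1 = T.tOf (Arena.FinRun.last r).1 (b, c, (σ r).2.2) ∧
      (σ r').1 = T.tOf (Arena.FinRun.last r').1 (b, c, (σ r').2.2)

structure TwinRuns (T : TimedGame) (ν ν₀ : T.C → ℝ) (r r₀ : T.PreRunF) : Prop where
  sameType : T.sameType r r₀
  sameAffineForm : SameAffineForm ν ν₀ r.last.1.2 r₀.last.1.2 r.time r₀.time

theorem TwinRuns.extend {σ : T.PreRunF → T.RMove} (hσ : T.TypePreservingMoves σ)
    {r r₀ : T.PreRunF} (h : T.TwinRuns ν ν₀ r r₀) (hT : BoundsTransfer ν₀ ν) {q q₀ : T.Omega}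
    (hq : T.preArena.Tr r.last (σ r) q) (hq₀ : T.preArena.Tr r₀.last (σ r₀) q₀) :
    T.TwinRuns ν ν₀ (r.extend (σ r) q hq) (r₀.extend (σ r₀) q₀ hq₀) := by
  obtain ⟨hmv, b, c, -, ht, ht₀⟩ := hσ r r₀ h.sameType
  have hqR : q.2 = q₀.2 := regAct_unique hq.2.2.1 (by rw [hmv]; exact hq₀.2.2.1)
  refine ⟨h.sameType.extend hq hq₀ hmv hqR, ?_⟩
  have hstep := h.sameAffineForm.elapse_reset (h.sameAffineForm.boundaryDelay hT b c)
    (T.ϱ (σ r).2.2)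
  rw [Arena.FinRun.time_extend, Arena.FinRun.time_extend, Arena.FinRun.last_extend,
    Arena.FinRun.last_extend, hq.2.2.2, hq₀.2.2.2]
  simp only [preArena, tsucc]
  rw [ht, ht₀, ← hmv, tOf_eq_max, tOf_eq_max]
  exact_mod_cast hstep

theorem twinRuns_play {μ : T.MinPre} {χ : T.MaxPre} (hμ : T.MinTP μ) (hχ : T.MaxTP χ)
    {q q₀ : T.Omega} (hq : q.2 = q₀.2) (hT : BoundsTransfer q₀.1.2 q.1.2) :
    ∀ n, T.TwinRuns q.1.2 q₀.1.2 (T.preArena.play μ χ q n) (T.preArena.play μ χ q₀ n)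
  | 0 => ⟨sameType_single hq, by
      simpa only [Arena.play, Arena.time_single, Arena.last_single] using
        sameAffineForm_init q.1.2 q₀.1.2⟩
  | n + 1 => by
    have ih := twinRuns_play hμ hχ hq hT n
    have hmin : T.preArena.IsMin (T.preArena.play μ χ q n).last ↔
        T.preArena.IsMin (T.preArena.play μ χ q₀ n).last := by
      show _ ∈ T.LMin ↔ _ ∈ T.LMin
      rw [ih.sameType.last_region]
    simp only [Arena.play]
    by_cases h : T.preArena.IsMin (T.preArena.play μ χ q n).last
    · rw [dif_pos h, dif_pos (hmin.mp h)]
      exact ih.extend hμ.2 hT _ _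
    · rw [dif_neg h, dif_neg (mt hmin.mpr h)]
      exact ih.extend hχ.2 hT _ _

theorem simpleOn_of_forall_eq_sub_extVal {X : Set T.Omega} {F : T.Omega → ℝ} (E : ℤ)
    (Y : Option T.C) (h : ∀ q ∈ X, F q = E - extVal q.1.2 Y) : T.SimpleOn X F := by
  cases Y with
  | none => exact Or.inl ⟨E, fun q hq => by simpa [extVal] using h q hq⟩
  | some c => exact Or.inr ⟨E, c, h⟩

end TimedGame

/-- Type-preserving boundary strategy pairs yield regionally simple total time
for finite runs: for all `μ ∈ Ξ_Min`, `χ ∈ Ξ_Max` and `n ∈ ℕ`, the function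
`q ↦ time(run_n(q, μ, χ))` is regionally simple. -/
theorem typePreserving_time_regionally_simple (T : TimedGame)
    (μ : T.MinPre) (hμ : T.MinTP μ) (χ : T.MaxPre) (hχ : T.MaxTP χ) (n : ℕ) :
    T.RegionallySimple (fun q : T.Omega =>
      Arena.FinRun.time (Arena.play T.preArena μ χ q n)) := by
  intro R
  rcases R.2.1.eq_empty_or_nonempty with hR | ⟨ν₀, hν₀⟩
  · refine Or.inl ⟨0, fun q ⟨hq, hqR⟩ => absurd hq.2 ?_⟩
    rw [hqR, hR, closure_empty]
    exact Set.notMem_empty _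
  let q₀ : T.Omega := ((R.1, ν₀), R)
  obtain ⟨E₀, Y₀, -, hq₀⟩ :=
    (TimedGame.twinRuns_play hμ hχ (q := q₀) rfl (.refl ν₀) n).sameAffineForm.time
  refine TimedGame.simpleOn_of_forall_eq_sub_extVal E₀ Y₀ fun q ⟨hq, hqR⟩ => ?_
  have hT : BoundsTransfer ν₀ q.1.2 := R.2.2.boundsTransfer hν₀ (hqR ▸ hq.2)
  obtain ⟨E, Y, hE, hE₀⟩ :=
    (TimedGame.twinRuns_play hμ hχ (q₀ := q₀) hqR hT n).sameAffineForm.time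
  rw [hE]
  exact hT.sub_extVal_eq (hE₀.symm.trans hq₀)
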